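/- Let ε_n > 0 and μ_n ∈ (0,1] be such that the probability under (X^n, Y^n) ~ Q_{X^n} Q_{Y^n|X^n} that (X^n, Y^n) ∉ 𝒜_{ε_n} is at most μ_n, and suppose R_n − I(X;Y) − ε_n = (c − r)(log₂ n)/n with c > r > 0. Let S̄ be the set of codebooks C of size 2^{n R_n} such that Σ_{y^n} P_{C,2}(y^n) < μ_n(1 + 1/√n) and D_{C,1}(y^n) < 1 + 1/√n for every y^n ∈ 𝒴^n. Then the probability over the random i.i.d. codebook 𝒞 that 𝒞 ∉ S̄ is at most e^{−(μ_n/(3n)) 2^{n R_n}} + |𝒴|^n e^{−(1/3) n^{c − r − 1}}. -/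

import Mathlib

open Finset Real
open scoped BigOperators Classical

noncomputable section SoftCovering

/-- `p` is a probability mass function on the finite type `α`. -/
def IsPMF {α : Type*} [Fintype α] (p : α → ℝ) : Prop :=
  (∀ a, 0 ≤ p a) ∧ ∑ a, p a = 1

variable {𝒳 𝒴 : Type*} [Fintype 𝒳] [Fintype 𝒴]

/-- The output distribution `Q_Y` on `𝒴` induced by the input distribution `Q_X`
and the channel `Q_{Y|X}`. -/
def outDist (QX : 𝒳 → ℝ) (QYX : 𝒳 → 𝒴 → ℝ) (y : 𝒴) : ℝ := ∑ x, QX x * QYX x y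

/-- The `n`-fold i.i.d. product of a distribution `p`. -/
def prodDist {α : Type*} [Fintype α] (p : α → ℝ) (n : ℕ) (xs : Fin n → α) : ℝ :=
  ∏ i, p (xs i)

/-- The `n`-fold memoryless channel: `Q_{Y^n|X^n = xs}(ys)`. -/
def chanProd (QYX : 𝒳 → 𝒴 → ℝ) (n : ℕ) (xs : Fin n → 𝒳) (ys : Fin n → 𝒴) : ℝ :=
  ∏ i, QYX (xs i) (ys i)

/-- The information density `ı_{X;Y}(x;y) = log₂ (Q_{Y|X}(y|x) / Q_Y(y))`, in bits. -/
def infoDensity (QX : 𝒳 → ℝ) (QYX : 𝒳 → 𝒴 → ℝ) (x : 𝒳) (y : 𝒴) : ℝ :=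
  Real.logb 2 (QYX x y / outDist QX QYX y)

/-- The mutual information `I(X;Y)` of `(X,Y) ~ Q_X Q_{Y|X}`, in bits. -/
def mutualInfo (QX : 𝒳 → ℝ) (QYX : 𝒳 → 𝒴 → ℝ) : ℝ :=
  ∑ x, ∑ y, QX x * QYX x y * infoDensity QX QYX x y

/-- The variance `V` of the information density under `(X,Y) ~ Q_X Q_{Y|X}`. -/
def infoVar (QX : 𝒳 → ℝ) (QYX : 𝒳 → 𝒴 → ℝ) : ℝ :=
  ∑ x, ∑ y, QX x * QYX x y * (infoDensity QX QYX x y - mutualInfo QX QYX) ^ 2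

/-- The centered third absolute moment `ρ` of the information density. -/
def infoThird (QX : 𝒳 → ℝ) (QYX : 𝒳 → 𝒴 → ℝ) : ℝ :=
  ∑ x, ∑ y, QX x * QYX x y * |infoDensity QX QYX x y - mutualInfo QX QYX| ^ 3

/-- The Rényi divergence of order `a` between `Q_{X,Y} = Q_X Q_{Y|X}` and the product
of its marginals `Q_X Q_Y`, in bits. -/
def renyiDiv (QX : 𝒳 → ℝ) (QYX : 𝒳 → 𝒴 → ℝ) (a : ℝ) : ℝ :=
  (a - 1)⁻¹ * Real.logb 2 (∑ x, ∑ y,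
    (QX x * QYX x y) ^ a * (QX x * outDist QX QYX y) ^ (1 - a))

/-- Membership in the jointly typical set
`𝒜_ε = {(x^n,y^n) : (1/n) log₂ (Q_{Y^n|X^n=x^n}(y^n)/Q_{Y^n}(y^n)) ≤ I(X;Y) + ε}`. -/
def JTypical (QX : 𝒳 → ℝ) (QYX : 𝒳 → 𝒴 → ℝ) (n : ℕ) (ε : ℝ)
    (xs : Fin n → 𝒳) (ys : Fin n → 𝒴) : Prop :=
  (n : ℝ)⁻¹ * Real.logb 2 (chanProd QYX n xs ys / prodDist (outDist QX QYX) n ys)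
    ≤ mutualInfo QX QYX + ε

/-- The probability that `(X^n, Y^n) ~ Q_{X^n} Q_{Y^n|X^n}` is outside `𝒜_ε`. -/
def atypProb (QX : 𝒳 → ℝ) (QYX : 𝒳 → 𝒴 → ℝ) (n : ℕ) (ε : ℝ) : ℝ :=
  ∑ xs : Fin n → 𝒳, ∑ ys : Fin n → 𝒴,
    if ¬ JTypical QX QYX n ε xs ys then prodDist QX n xs * chanProd QYX n xs ys else 0

/-- The induced output distribution `P_{Y^n|C} = 2^{-nR} ∑_m Q_{Y^n|X^n = x^n(m)}`
of a codebook `C` of size `M = 2^{nR}` (so `2^{-nR} = 1/M`). -/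
def inducedDist (QYX : 𝒳 → 𝒴 → ℝ) (n M : ℕ) (C : Fin M → Fin n → 𝒳)
    (ys : Fin n → 𝒴) : ℝ :=
  (M : ℝ)⁻¹ * ∑ m, chanProd QYX n (C m) ys

/-- The typical part `P_{C,1}(y^n) = 2^{-nR} ∑_m Q_{Y^n|X^n=x^n(m)}(y^n) 1{(x^n(m),y^n) ∈ 𝒜_ε}`. -/
def Ptyp (QX : 𝒳 → ℝ) (QYX : 𝒳 → 𝒴 → ℝ) (n M : ℕ) (ε : ℝ)
    (C : Fin M → Fin n → 𝒳) (ys : Fin n → 𝒴) : ℝ :=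
  (M : ℝ)⁻¹ * ∑ m, if JTypical QX QYX n ε (C m) ys then chanProd QYX n (C m) ys else 0

/-- The atypical part `P_{C,2}(y^n) = 2^{-nR} ∑_m Q_{Y^n|X^n=x^n(m)}(y^n) 1{(x^n(m),y^n) ∉ 𝒜_ε}`. -/
def Patyp (QX : 𝒳 → ℝ) (QYX : 𝒳 → 𝒴 → ℝ) (n M : ℕ) (ε : ℝ)
    (C : Fin M → Fin n → 𝒳) (ys : Fin n → 𝒴) : ℝ :=
  (M : ℝ)⁻¹ * ∑ m, if ¬ JTypical QX QYX n ε (C m) ys then chanProd QYX n (C m) ys else 0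

/-- The density `D_{C,1}(y^n) = P_{C,1}(y^n)/Q_{Y^n}(y^n)
= 2^{-nR} ∑_m (Q_{Y^n|X^n=x^n(m)}(y^n)/Q_{Y^n}(y^n)) 1{(x^n(m),y^n) ∈ 𝒜_ε}`. -/
def Dtyp (QX : 𝒳 → ℝ) (QYX : 𝒳 → 𝒴 → ℝ) (n M : ℕ) (ε : ℝ)
    (C : Fin M → Fin n → 𝒳) (ys : Fin n → 𝒴) : ℝ :=
  (M : ℝ)⁻¹ * ∑ m, if JTypical QX QYX n ε (C m) ys then
    chanProd QYX n (C m) ys / prodDist (outDist QX QYX) n ys else 0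

/-- Total variation distance `(1/2) ∑_y |P y - Q y|` on a finite type. -/
def tvDist {β : Type*} [Fintype β] (P Q : β → ℝ) : ℝ := (1 / 2) * ∑ y, |P y - Q y|

/-- Probability of an event `E` over the random codebook of `M` codewords drawn
i.i.d. from `Q_{X^n}`. -/
def cbProb (QX : 𝒳 → ℝ) (n M : ℕ) (E : (Fin M → Fin n → 𝒳) → Prop) : ℝ :=
  ∑ C : Fin M → Fin n → 𝒳, if E C then ∏ m, prodDist QX n (C m) else 0

/-- `𝒬(x)`: one minus the standard normal cumulative distribution function. -/
def gaussQ (x : ℝ) : ℝ :=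
  (Real.sqrt (2 * Real.pi))⁻¹ * ∫ t in Set.Ioi x, Real.exp (-(t ^ 2 / 2))

/-- `𝒬⁻¹`, the inverse of `𝒬`. -/
def gaussQInv : ℝ → ℝ := Function.invFun gaussQ

/-!
Both ways a codebook can fail to be good are upper large deviations of an empirical mean of
`M = 2^{nR_n}` i.i.d. bounded functions of the codewords. The atypical mass `∑_{y^n} P_{C,2}(y^n)`
averages the `[0,1]`-valued probability that a codeword's output is atypical, whose mean is the
atypical probability `≤ μ_n`. For fixed `y^n`, `D_{C,1}(y^n)` averages the truncated density
`Q_{Y^n|X^n}(y^n)/Q_{Y^n}(y^n) · 1{𝒜_ε}`, which has mean `≤ 1` and, by the very definition of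
`𝒜_ε`, is at most `b = 2^{n(I(X;Y)+ε_n)}`. The multiplicative Chernoff bound with `δ = 1/√n`
bounds the two deviation probabilities by `exp(-δ²μM/3)` and `exp(-δ²M/(3b))`, the rate gap gives
`M/b = n^{c-r}`, and a union bound over the `|𝒴|^n` outputs `y^n` finishes.
-/

section IidProb

variable {α : Type*} [Fintype α]

/-- `cbProb QX n M` is definitionally `iidProb (prodDist QX n) M`. -/
def iidProb (P : α → ℝ) (M : ℕ) (E : (Fin M → α) → Prop) : ℝ :=
  ∑ C : Fin M → α, if E C then ∏ m, P (C m) else 0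

variable {P : α → ℝ} {M : ℕ}

theorem iidProb_mono (hP : ∀ a, 0 ≤ P a) {E F : (Fin M → α) → Prop} (h : ∀ C, E C → F C) :
    iidProb P M E ≤ iidProb P M F := by
  refine Finset.sum_le_sum fun C _ => ?_
  have hC : 0 ≤ ∏ m, P (C m) := Finset.prod_nonneg fun m _ => hP (C m)
  split_ifs <;> simp_all

theorem iidProb_or_le (hP : ∀ a, 0 ≤ P a) (E F : (Fin M → α) → Prop) :
    iidProb P M (fun C => E C ∨ F C) ≤ iidProb P M E + iidProb P M F := by
  rw [iidProb, iidProb, iidProb, ← Finset.sum_add_distrib]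
  refine Finset.sum_le_sum fun C _ => ?_
  have hC : 0 ≤ ∏ m, P (C m) := Finset.prod_nonneg fun m _ => hP (C m)
  split_ifs <;> simp_all

theorem iidProb_exists_le (hP : ∀ a, 0 ≤ P a) {β : Type*} [Fintype β]
    (E : β → (Fin M → α) → Prop) :
    iidProb P M (fun C => ∃ y, E y C) ≤ ∑ y, iidProb P M (E y) := by
  simp only [iidProb]
  rw [Finset.sum_comm]
  refine Finset.sum_le_sum fun C _ => ?_
  have hterm (y : β) : 0 ≤ if E y C then ∏ m, P (C m) else 0 := by
    split_ifs
    exacts [Finset.prod_nonneg fun m _ => hP (C m), le_rfl]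
  split_ifs with hE
  · obtain ⟨y, hy⟩ := hE
    simpa [hy] using Finset.single_le_sum (fun y _ => hterm y) (Finset.mem_univ y)
  · exact Finset.sum_nonneg fun y _ => hterm y

/-- Markov's inequality applied to `exp (t ∑ f)`, whose mean factorizes over the draws. -/
theorem iidProb_le_exp_mul_mgf_pow (hP : ∀ a, 0 ≤ P a) (f : α → ℝ) (s : ℝ) {t : ℝ}
    (ht : 0 ≤ t) :
    iidProb P M (fun C => s ≤ ∑ m, f (C m))
      ≤ exp (-(t * s)) * (∑ a, P a * exp (t * f a)) ^ M := by
  rw [Fintype.sum_pow, Finset.mul_sum]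
  refine Finset.sum_le_sum fun C _ => ?_
  have hC : 0 ≤ ∏ m, P (C m) := Finset.prod_nonneg fun m _ => hP (C m)
  have hfactor : exp (-(t * s)) * ∏ m, P (C m) * exp (t * f (C m))
      = (∏ m, P (C m)) * exp (t * (∑ m, f (C m) - s)) := by
    rw [Finset.prod_mul_distrib, ← Real.exp_sum, ← Finset.mul_sum, mul_left_comm,
      ← Real.exp_add]
    ring_nf
  rw [hfactor]
  split_ifs with hs
  · exact le_mul_of_one_le_right hC (Real.one_le_exp (mul_nonneg ht (by linarith)))
  · positivity

theorem sum_mul_exp_mul_le_exp (hP : IsPMF P) {f : α → ℝ} (hf0 : ∀ a, 0 ≤ f a)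
    (hf1 : ∀ a, f a ≤ 1) {μ : ℝ} (hmean : ∑ a, P a * f a ≤ μ) {t : ℝ} (ht : 0 ≤ t) :
    ∑ a, P a * exp (t * f a) ≤ exp ((exp t - 1) * μ) := by
  -- convexity of `exp` between `0` and `t`
  have hchord (a : α) : exp (t * f a) ≤ 1 + (exp t - 1) * f a := by
    have := convexOn_exp.2 (Set.mem_univ 0) (Set.mem_univ t) (sub_nonneg.2 (hf1 a)) (hf0 a)
      (sub_add_cancel 1 (f a))
    simp only [smul_eq_mul, mul_zero, zero_add, Real.exp_zero, mul_one] at this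
    calc exp (t * f a) = exp (f a * t) := by rw [mul_comm]
      _ ≤ 1 - f a + f a * exp t := this
      _ = 1 + (exp t - 1) * f a := by ring
  have het : 0 ≤ exp t - 1 := by linarith [Real.one_le_exp ht]
  calc ∑ a, P a * exp (t * f a) ≤ ∑ a, P a * (1 + (exp t - 1) * f a) :=
        Finset.sum_le_sum fun a _ => mul_le_mul_of_nonneg_left (hchord a) (hP.1 a)
    _ = 1 + (exp t - 1) * ∑ a, P a * f a := by
        simp only [mul_add, mul_one, Finset.sum_add_distrib, hP.2, Finset.mul_sum]
        congr 1
        exact Finset.sum_congr rfl fun a _ => by ring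
    _ ≤ 1 + (exp t - 1) * μ := by gcongr
    _ ≤ exp ((exp t - 1) * μ) := by linarith [Real.add_one_le_exp ((exp t - 1) * μ)]

theorem add_sq_div_three_le_one_add_mul_log_one_add {δ : ℝ} (hδ0 : 0 ≤ δ) (hδ1 : δ ≤ 1) :
    δ + δ ^ 2 / 3 ≤ (1 + δ) * log (1 + δ) := by
  have hlog := Real.le_log_one_add_of_nonneg hδ0
  have hfrac : δ + δ ^ 2 / 3 ≤ (1 + δ) * (2 * δ / (δ + 2)) := by
    rw [mul_div_assoc', le_div_iff₀ (by linarith)]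
    nlinarith [sq_nonneg δ]
  exact hfrac.trans (by gcongr)

/-- The multiplicative Chernoff bound for `[0,1]`-valued summands. -/
theorem iidProb_sum_ge_le_exp (hP : IsPMF P) {f : α → ℝ} (hf0 : ∀ a, 0 ≤ f a)
    (hf1 : ∀ a, f a ≤ 1) {μ : ℝ} (hμ : 0 ≤ μ) (hmean : ∑ a, P a * f a ≤ μ) {δ : ℝ}
    (hδ0 : 0 ≤ δ) (hδ1 : δ ≤ 1) :
    iidProb P M (fun C => (1 + δ) * μ * M ≤ ∑ m, f (C m)) ≤ exp (-(δ ^ 2 * μ * M / 3)) := by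
  have ht : 0 ≤ log (1 + δ) := Real.log_nonneg (by linarith)
  have hmgf := sum_mul_exp_mul_le_exp hP hf0 hf1 hmean ht
  rw [Real.exp_log (by linarith), add_sub_cancel_left] at hmgf
  have hμM : 0 ≤ μ * M := by positivity
  have hkey := add_sq_div_three_le_one_add_mul_log_one_add hδ0 hδ1
  calc iidProb P M (fun C => (1 + δ) * μ * M ≤ ∑ m, f (C m))
      ≤ exp (-(log (1 + δ) * ((1 + δ) * μ * M))) * (∑ a, P a * exp (log (1 + δ) * f a)) ^ M :=
        iidProb_le_exp_mul_mgf_pow hP.1 f _ ht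
    _ ≤ exp (-(log (1 + δ) * ((1 + δ) * μ * M))) * exp (δ * μ) ^ M := by
        gcongr
        exact Finset.sum_nonneg fun a _ => mul_nonneg (hP.1 a) (Real.exp_pos _).le
    _ ≤ exp (-(δ ^ 2 * μ * M / 3)) := by
        rw [← Real.exp_nat_mul, ← Real.exp_add, Real.exp_le_exp]
        nlinarith [mul_le_mul_of_nonneg_right hkey hμM]

theorem iidProb_mean_ge_le_exp (hP : IsPMF P) {f : α → ℝ} {B : ℝ} (hB : 0 < B)
    (hf0 : ∀ a, 0 ≤ f a) (hfB : ∀ a, f a ≤ B) {μ : ℝ} (hμ : 0 ≤ μ)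
    (hmean : ∑ a, P a * f a ≤ μ) {δ : ℝ} (hδ0 : 0 ≤ δ) (hδ1 : δ ≤ 1) :
    iidProb P M (fun C => (1 + δ) * μ ≤ (M : ℝ)⁻¹ * ∑ m, f (C m))
      ≤ exp (-(δ ^ 2 * μ * M / (3 * B))) := by
  have hscaled := iidProb_sum_ge_le_exp (M := M) hP (f := fun a => f a / B)
    (fun a => div_nonneg (hf0 a) hB.le) (fun a => (div_le_one hB).2 (hfB a))
    (div_nonneg hμ hB.le) (by simpa only [mul_div_assoc', ← Finset.sum_div]
      using div_le_div_of_nonneg_right hmean hB.le) hδ0 hδ1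
  refine le_trans (iidProb_mono hP.1 fun C hC => ?_) (hscaled.trans_eq (by ring_nf))
  rw [← Finset.sum_div, show (1 + δ) * (μ / B) * M = (1 + δ) * μ * M / B by ring,
    div_le_div_iff_of_pos_right hB]
  rcases M.eq_zero_or_pos with rfl | hM
  · simp
  · rwa [inv_mul_eq_div, le_div_iff₀ (by positivity)] at hC

end IidProb

section Channel

theorem IsPMF.prodDist {α : Type*} [Fintype α] {p : α → ℝ} (hp : IsPMF p) (n : ℕ) :
    IsPMF (prodDist p n) :=
  ⟨fun xs => Finset.prod_nonneg fun i _ => hp.1 (xs i), by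
    show ∑ xs : Fin n → α, ∏ i, p (xs i) = 1
    rw [← Fintype.sum_pow, hp.2, one_pow]⟩

theorem IsPMF.outDist {QX : 𝒳 → ℝ} {QYX : 𝒳 → 𝒴 → ℝ} (hQX : IsPMF QX)
    (hQYX : ∀ x, IsPMF (QYX x)) : IsPMF (outDist QX QYX) := by
  refine ⟨fun y => Finset.sum_nonneg fun x _ => mul_nonneg (hQX.1 x) ((hQYX x).1 y), ?_⟩
  simp only [_root_.outDist]
  rw [Finset.sum_comm]
  simp [← Finset.mul_sum, (hQYX _).2, hQX.2]

theorem isPMF_chanProd {α β : Type*} [Fintype β] {W : α → β → ℝ} (hW : ∀ x, IsPMF (W x))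
    (n : ℕ) (xs : Fin n → α) : IsPMF (chanProd W n xs) :=
  ⟨fun ys => Finset.prod_nonneg fun i _ => (hW (xs i)).1 (ys i), by
    show ∑ ys : Fin n → β, ∏ i, W (xs i) (ys i) = 1
    rw [← Fintype.prod_sum]
    simp [(hW _).2]⟩

theorem sum_prodDist_mul_chanProd (QX : 𝒳 → ℝ) (QYX : 𝒳 → 𝒴 → ℝ) (n : ℕ) (ys : Fin n → 𝒴) :
    ∑ xs, prodDist QX n xs * chanProd QYX n xs ys = prodDist (outDist QX QYX) n ys := by
  simp only [prodDist, chanProd, outDist, ← Finset.prod_mul_distrib]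
  exact (Fintype.prod_sum fun i x => QX x * QYX x (ys i)).symm

variable (QX : 𝒳 → ℝ) (QYX : 𝒳 → 𝒴 → ℝ) (n : ℕ) (ε : ℝ)

def atypMass (xs : Fin n → 𝒳) : ℝ :=
  ∑ ys, if ¬ JTypical QX QYX n ε xs ys then chanProd QYX n xs ys else 0

/-- The summand of `D_{C,1}(y^n)` contributed by the codeword `xs`. -/
def typDensity (xs : Fin n → 𝒳) (ys : Fin n → 𝒴) : ℝ :=
  if JTypical QX QYX n ε xs ys then chanProd QYX n xs ys / prodDist (outDist QX QYX) n ys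
  else 0

theorem sum_Patyp_eq {M : ℕ} (C : Fin M → Fin n → 𝒳) :
    ∑ ys, Patyp QX QYX n M ε C ys = (M : ℝ)⁻¹ * ∑ m, atypMass QX QYX n ε (C m) := by
  simp only [Patyp, atypMass, ← Finset.mul_sum]
  rw [Finset.sum_comm]

theorem sum_prodDist_mul_atypMass :
    ∑ xs, prodDist QX n xs * atypMass QX QYX n ε xs = atypProb QX QYX n ε := by
  simp only [atypMass, atypProb, Finset.mul_sum, mul_ite, mul_zero]

variable {QX QYX n ε}

theorem cbProb_not_good_le {M : ℕ} (hQX : ∀ x, 0 ≤ QX x) (μ δ : ℝ) :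
    cbProb QX n M (fun C => ¬ ((∑ ys, Patyp QX QYX n M ε C ys) < μ * (1 + δ) ∧
        ∀ ys, Dtyp QX QYX n M ε C ys < 1 + δ))
      ≤ iidProb (prodDist QX n) M
          (fun C => (1 + δ) * μ ≤ (M : ℝ)⁻¹ * ∑ m, atypMass QX QYX n ε (C m))
        + ∑ ys, iidProb (prodDist QX n) M
          (fun C => (1 + δ) * 1 ≤ (M : ℝ)⁻¹ * ∑ m, typDensity QX QYX n ε (C m) ys) := by
  have hP (xs : Fin n → 𝒳) : 0 ≤ prodDist QX n xs := Finset.prod_nonneg fun i _ => hQX (xs i)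
  calc cbProb QX n M _
      ≤ iidProb (prodDist QX n) M
          (fun C => (1 + δ) * μ ≤ (M : ℝ)⁻¹ * ∑ m, atypMass QX QYX n ε (C m)
            ∨ ∃ ys, (1 + δ) * 1 ≤ (M : ℝ)⁻¹ * ∑ m, typDensity QX QYX n ε (C m) ys) :=
        iidProb_mono hP fun C hC => by
          rw [not_and_or, not_forall, sum_Patyp_eq] at hC
          simp only [not_lt, mul_comm μ] at hC
          exact hC.imp id fun ⟨ys, hys⟩ => ⟨ys, by rwa [mul_one]⟩
    _ ≤ _ := (iidProb_or_le hP _ _).trans (add_le_add le_rfl (iidProb_exists_le hP _))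

theorem atypMass_nonneg (hQYX : ∀ x, IsPMF (QYX x)) (xs : Fin n → 𝒳) :
    0 ≤ atypMass QX QYX n ε xs :=
  Finset.sum_nonneg fun ys _ => by
    by_cases hJ : JTypical QX QYX n ε xs ys <;> simp [hJ, (isPMF_chanProd hQYX n xs).1 ys]

theorem atypMass_le_one (hQYX : ∀ x, IsPMF (QYX x)) (xs : Fin n → 𝒳) :
    atypMass QX QYX n ε xs ≤ 1 := by
  refine (Finset.sum_le_sum fun ys _ => ?_).trans_eq (isPMF_chanProd hQYX n xs).2
  by_cases hJ : JTypical QX QYX n ε xs ys <;> simp [hJ, (isPMF_chanProd hQYX n xs).1 ys]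

theorem typDensity_nonneg (hQX : IsPMF QX) (hQYX : ∀ x, IsPMF (QYX x)) (xs : Fin n → 𝒳)
    (ys : Fin n → 𝒴) : 0 ≤ typDensity QX QYX n ε xs ys := by
  unfold typDensity
  split_ifs
  exacts [div_nonneg ((isPMF_chanProd hQYX n xs).1 ys) (((hQX.outDist hQYX).prodDist n).1 ys),
    le_rfl]

theorem typDensity_le_two_rpow (hn : 0 < n) (xs : Fin n → 𝒳) (ys : Fin n → 𝒴) :
    typDensity QX QYX n ε xs ys ≤ 2 ^ ((n : ℝ) * (mutualInfo QX QYX + ε)) := by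
  have hpos : (0 : ℝ) < 2 ^ ((n : ℝ) * (mutualInfo QX QYX + ε)) := by positivity
  unfold typDensity
  split_ifs with hJ
  · set ρ := chanProd QYX n xs ys / prodDist (outDist QX QYX) n ys
    rcases le_or_gt ρ 0 with hρ | hρ
    · linarith
    rw [← Real.rpow_logb two_pos (by norm_num) hρ]
    exact Real.rpow_le_rpow_of_exponent_le one_le_two
      ((inv_mul_le_iff₀ (Nat.cast_pos.2 hn)).1 hJ)
  · exact hpos.le

theorem sum_prodDist_mul_typDensity_le_one (hQX : IsPMF QX) (hQYX : ∀ x, IsPMF (QYX x))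
    (ys : Fin n → 𝒴) : ∑ xs, prodDist QX n xs * typDensity QX QYX n ε xs ys ≤ 1 := by
  set q := prodDist (outDist QX QYX) n ys
  calc ∑ xs, prodDist QX n xs * typDensity QX QYX n ε xs ys
      ≤ ∑ xs, prodDist QX n xs * (chanProd QYX n xs ys / q) := by
        refine Finset.sum_le_sum fun xs _ => mul_le_mul_of_nonneg_left ?_ ((hQX.prodDist n).1 xs)
        unfold typDensity
        split_ifs
        exacts [le_rfl,
          div_nonneg ((isPMF_chanProd hQYX n xs).1 ys) (((hQX.outDist hQYX).prodDist n).1 ys)]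
    _ = q / q := by
        simp only [mul_div_assoc', ← Finset.sum_div, q, sum_prodDist_mul_chanProd]
    _ ≤ 1 := div_self_le_one q

end Channel

theorem two_rpow_mul_eq_mul_rpow {n : ℕ} (hn : 0 < n) {R I ε a : ℝ}
    (hgap : R - I - ε = a * logb 2 n / n) :
    (2 : ℝ) ^ ((n : ℝ) * R) = 2 ^ ((n : ℝ) * (I + ε)) * (n : ℝ) ^ a := by
  have hnR : (0 : ℝ) < n := Nat.cast_pos.2 hn
  have hexp : (n : ℝ) * R = n * (I + ε) + logb 2 n * a := by
    rw [show R = I + ε + a * logb 2 n / n by linarith]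
    field_simp
  rw [hexp, Real.rpow_add two_pos, Real.rpow_mul zero_le_two (logb 2 n) a,
    Real.rpow_logb two_pos (by norm_num) hnR]

theorem good_codebooks_union_bound_second_order_general
    {𝒳 𝒴 : Type*} [Fintype 𝒳] [Fintype 𝒴]
    (QX : 𝒳 → ℝ) (QYX : 𝒳 → 𝒴 → ℝ) (hQX : IsPMF QX) (hQYX : ∀ x, IsPMF (QYX x))
    (Rn : ℝ) (n M : ℕ) (hn : 0 < n) (hM : (M : ℝ) = 2 ^ ((n : ℝ) * Rn))
    (εn : ℝ)
    (μn : ℝ) (hμn : μn ∈ Set.Ioc (0 : ℝ) 1) (hatyp : atypProb QX QYX n εn ≤ μn)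
    (c r : ℝ)
    (hgap : Rn - mutualInfo QX QYX - εn = (c - r) * Real.logb 2 ↑n / ↑n) :
    cbProb QX n M (fun C =>
        ¬ ((∑ ys, Patyp QX QYX n M εn C ys) < μn * (1 + (Real.sqrt ↑n)⁻¹) ∧
          ∀ ys : Fin n → 𝒴, Dtyp QX QYX n M εn C ys < 1 + (Real.sqrt ↑n)⁻¹))
      ≤ Real.exp (-(μn / (3 * ↑n)) * 2 ^ ((n : ℝ) * Rn))
        + (Fintype.card 𝒴 : ℝ) ^ n * Real.exp (-(1 / 3) * (n : ℝ) ^ (c - r - 1)) := by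
  set δ : ℝ := (Real.sqrt n)⁻¹
  set b : ℝ := 2 ^ ((n : ℝ) * (mutualInfo QX QYX + εn)) with hb_def
  have hnR : (0 : ℝ) < n := Nat.cast_pos.2 hn
  have hb : 0 < b := by positivity
  have hδ0 : 0 ≤ δ := by positivity
  have hδ1 : δ ≤ 1 := inv_le_one_of_one_le₀ (Real.one_le_sqrt.2 (Nat.one_le_cast.2 hn))
  have hδsq : δ ^ 2 = (n : ℝ)⁻¹ := by rw [inv_pow, Real.sq_sqrt hnR.le]
  have hP := hQX.prodDist n
  have hatypDev := iidProb_mean_ge_le_exp (M := M) hP one_pos (atypMass_nonneg hQYX)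
    (atypMass_le_one hQYX) hμn.1.le ((sum_prodDist_mul_atypMass ..).trans_le hatyp) hδ0 hδ1
  have htypDev (ys : Fin n → 𝒴) := iidProb_mean_ge_le_exp (M := M) hP hb
    (typDensity_nonneg hQX hQYX · ys) (typDensity_le_two_rpow hn · ys) zero_le_one
    (sum_prodDist_mul_typDensity_le_one hQX hQYX ys) hδ0 hδ1
  calc cbProb QX n M _
      ≤ _ := cbProb_not_good_le hQX.1 μn δ
    _ ≤ _ := add_le_add hatypDev (Finset.sum_le_sum fun ys _ => htypDev ys)
    _ = _ := by
      rw [Finset.sum_const, Finset.card_univ, Fintype.card_fun, Fintype.card_fin, nsmul_eq_mul,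
        hδsq, hM, two_rpow_mul_eq_mul_rpow hn hgap, ← hb_def, Real.rpow_sub_one hnR.ne']
      push_cast
      congr 2 <;> field_simp [hb.ne']

/-- **Union bound for the good set of codebooks, second-order version (Eq. (46)).**
Let `S̄` be the set of codebooks with `∑_{y^n} P_{C,2}(y^n) < μ_n(1 + 1/√n)` and
`D_{C,1}(y^n) < 1 + 1/√n` for all `y^n`.  Then
`ℙ(𝒞 ∉ S̄) ≤ e^{−(μ_n/(3n)) 2^{nR_n}} + |𝒴|^n e^{−(1/3) n^{c−r−1}}`. -/
theorem good_codebooks_union_bound_second_order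
    {𝒳 𝒴 : Type*} [Fintype 𝒳] [Fintype 𝒴]
    (QX : 𝒳 → ℝ) (QYX : 𝒳 → 𝒴 → ℝ) (hQX : IsPMF QX) (hQYX : ∀ x, IsPMF (QYX x))
    (Rn : ℝ) (n M : ℕ) (hn : 0 < n) (hM : (M : ℝ) = 2 ^ ((n : ℝ) * Rn))
    (εn : ℝ) (hεn : 0 < εn)
    (μn : ℝ) (hμn : μn ∈ Set.Ioc (0 : ℝ) 1) (hatyp : atypProb QX QYX n εn ≤ μn)
    (c r : ℝ) (hr : 0 < r) (hrc : r < c)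
    (hgap : Rn - mutualInfo QX QYX - εn = (c - r) * Real.logb 2 ↑n / ↑n) :
    cbProb QX n M (fun C =>
        ¬ ((∑ ys, Patyp QX QYX n M εn C ys) < μn * (1 + (Real.sqrt ↑n)⁻¹) ∧
          ∀ ys : Fin n → 𝒴, Dtyp QX QYX n M εn C ys < 1 + (Real.sqrt ↑n)⁻¹))
      ≤ Real.exp (-(μn / (3 * ↑n)) * 2 ^ ((n : ℝ) * Rn))
        + (Fintype.card 𝒴 : ℝ) ^ n * Real.exp (-(1 / 3) * (n : ℝ) ^ (c - r - 1)) :=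
  good_codebooks_union_bound_second_order_general QX QYX hQX hQYX Rn n M hn hM εn μn hμn hatyp c r
    hgap
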